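/- arXiv:2507.07304 — 4 statements merged into one kernel-verified Lean document; each statement's English description precedes it below -/
import Mathlib

section
/- Let g be a univariate real polynomial of degree ≤ p, let ν ∈ ℝ, and let l_0, …, l_p be the Lagrange basis polynomials associated with the nodes ξ_0, …, ξ_p (so l_i has degree p and l_i(ξ_j) = 1 if i = j and 0 otherwise). Define q̃(ξ, τ) := ∑_{i=0}^{p} g(ξ_i) · l_i(ξ − ν(τ+1)). Then q̃ ∈ V_p, q̃(ξ, −1) = g(ξ) for all ξ ∈ ℝ, and q̃ satisfies the predictor equation with data g; in particular, the predictor recovers the previous solution at the beginning of the time step. -/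
open BigOperators MvPolynomial

/-- Evaluation of a bivariate polynomial `Q` at the point `(x, t)`; variable `0` is the
space coordinate `ξ` and variable `1` is the time coordinate `τ`. -/
noncomputable def ev (Q : MvPolynomial (Fin 2) ℝ) (x t : ℝ) : ℝ :=
  MvPolynomial.eval ![x, t] Q

/-- `Vp p` is the space of real polynomial functions of `(ξ, τ)` of degree at most `p`
in each variable separately. -/
def Vp (p : ℕ) : Set (MvPolynomial (Fin 2) ℝ) :=
  {Q | Q.degreeOf 0 ≤ p ∧ Q.degreeOf 1 ≤ p}

/-- Discrete volume integral `⟨f⟩ = ∑ i j, w i * w j * f (ξ i) (ξ j)`. -/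
noncomputable def dVol {p : ℕ} (ξ w : Fin (p + 1) → ℝ) (f : ℝ → ℝ → ℝ) : ℝ :=
  ∑ i, ∑ j, w i * w j * f (ξ i) (ξ j)

/-- Discrete temporal-boundary integral `⟨f⟩_{τ=s} = ∑ i, w i * f (ξ i) s`. -/
noncomputable def dT {p : ℕ} (ξ w : Fin (p + 1) → ℝ) (f : ℝ → ℝ → ℝ) (s : ℝ) : ℝ :=
  ∑ i, w i * f (ξ i) s

/-- Discrete spatial-boundary integral `⟨f⟩_{ξ=s} = ∑ j, w j * f s (ξ j)`. -/
noncomputable def dX {p : ℕ} (ξ w : Fin (p + 1) → ℝ) (f : ℝ → ℝ → ℝ) (s : ℝ) : ℝ :=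
  ∑ j, w j * f s (ξ j)

/-- `q̃ ∈ V_p` satisfies the predictor equation with data `g` (a univariate polynomial
in `ξ`) and CFL number `ν` if for every `φ ∈ V_p`:
`⟨φ·(∂q̃/∂τ + ν ∂q̃/∂ξ)⟩ + ⟨φ·(q̃ − g)⟩_{τ=−1} = 0`. -/
def PredictorEq {p : ℕ} (ξ w : Fin (p + 1) → ℝ) (ν : ℝ) (g : Polynomial ℝ)
    (qt : MvPolynomial (Fin 2) ℝ) : Prop :=
  ∀ φ ∈ Vp p,
    dVol ξ w (fun x t => ev φ x t *
        (ev (pderiv 1 qt) x t + ν * ev (pderiv 0 qt) x t)) +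
      dT ξ w (fun x t => ev φ x t * (ev qt x t - g.eval x)) (-1) = 0

/-- `q ∈ V_p` satisfies the corrector equation with data `g` (a univariate polynomial
in `ξ`), left-flux trace `a` and right-flux trace `b` (univariate polynomials in `τ`)
and CFL number `ν` if for every `φ ∈ V_p`:
`⟨φ·(∂q/∂τ + ν ∂q/∂ξ)⟩ + ⟨φ·(q − g)⟩_{τ=−1} + ν ⟨φ·(b − q)⟩_{ξ=1} − ν ⟨φ·(a − q)⟩_{ξ=−1} = 0`. -/
def CorrectorEq {p : ℕ} (ξ w : Fin (p + 1) → ℝ) (ν : ℝ) (g a b : Polynomial ℝ)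
    (q : MvPolynomial (Fin 2) ℝ) : Prop :=
  ∀ φ ∈ Vp p,
    dVol ξ w (fun x t => ev φ x t *
        (ev (pderiv 1 q) x t + ν * ev (pderiv 0 q) x t)) +
      dT ξ w (fun x t => ev φ x t * (ev q x t - g.eval x)) (-1) +
      ν * dX ξ w (fun x t => ev φ x t * (b.eval t - ev q x t)) 1 -
      ν * dX ξ w (fun x t => ev φ x t * (a.eval t - ev q x t)) (-1) = 0

/-- The trace `τ ↦ Q(1, τ)` of a bivariate polynomial on the right spatial boundary
`ξ = 1`, as a univariate polynomial in `τ`. -/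
noncomputable def traceRight (Q : MvPolynomial (Fin 2) ℝ) : Polynomial ℝ :=
  MvPolynomial.eval₂ (Polynomial.C : ℝ →+* Polynomial ℝ) ![(1 : Polynomial ℝ), Polynomial.X] Q

/-! Writing `s := ξ - ν(τ + 1)`, the interpolant `∑ i, g(ξ i) · l i` of `g` at the `p + 1` nodes
is `g` itself, so `q̃ = g(s)`. The transport derivation `∂τ + ν ∂ξ` kills `s`, hence, by the chain
rule, every polynomial in `s`; and `s = ξ` at `τ = −1`. Both integrands of the predictor equation
therefore vanish identically. -/

theorem Polynomial.sum_C_eval_mul_eq_self {F ι : Type*} [Field F] [Fintype ι] [DecidableEq ι]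
    {v : ι → F} (hv : Function.Injective v) {l : ι → Polynomial F}
    (hl_deg : ∀ i, (l i).natDegree < Fintype.card ι)
    (hl_eval : ∀ i j, (l i).eval (v j) = if i = j then 1 else 0)
    {g : Polynomial F} (hg : g.natDegree < Fintype.card ι) :
    ∑ i, Polynomial.C (g.eval (v i)) * l i = g := by
  refine Polynomial.eq_of_natDegree_lt_card_of_eval_eq _ _ hv (fun j => ?_) (max_lt ?_ hg)
  · simp [Polynomial.eval_finsetSum, hl_eval]
  · refine (Polynomial.natDegree_sum_le_of_forall_le _ _ fun i _ =>
      (Polynomial.natDegree_C_mul_le _ _).trans (Nat.le_sub_one_of_lt (hl_deg i))).trans_lt ?_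
    omega

theorem MvPolynomial.totalDegree_aeval_le {σ R : Type*} [CommSemiring R]
    (s : MvPolynomial σ R) (f : Polynomial R) :
    (Polynomial.aeval s f).totalDegree ≤ f.natDegree * s.totalDegree := by
  rw [Polynomial.aeval_eq_sum_range]
  refine totalDegree_finsetSum_le fun n hn => (totalDegree_smul_le _ _).trans ?_
  exact (totalDegree_pow _ _).trans
    (Nat.mul_le_mul_right _ (Nat.lt_succ_iff.mp (Finset.mem_range.mp hn)))

theorem ev_aeval (s : MvPolynomial (Fin 2) ℝ) (f : Polynomial ℝ) (x t : ℝ) :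
    ev (Polynomial.aeval s f) x t = f.eval (ev s x t) :=
  (Polynomial.aeval_algHom_apply (MvPolynomial.aeval ![x, t]) s f).symm

theorem aeval_mem_Vp {p : ℕ} {s : MvPolynomial (Fin 2) ℝ} (hs : s.totalDegree ≤ 1)
    {f : Polynomial ℝ} (hf : f.natDegree ≤ p) : Polynomial.aeval s f ∈ Vp p := by
  have hdeg : (Polynomial.aeval s f).totalDegree ≤ p :=
    calc (Polynomial.aeval s f).totalDegree ≤ f.natDegree * s.totalDegree :=
          totalDegree_aeval_le s f
      _ ≤ f.natDegree * 1 := Nat.mul_le_mul_left _ hs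
      _ ≤ p := by rwa [mul_one]
  exact ⟨(degreeOf_le_totalDegree _ 0).trans hdeg, (degreeOf_le_totalDegree _ 1).trans hdeg⟩

noncomputable def advection (ν : ℝ) :
    Derivation ℝ (MvPolynomial (Fin 2) ℝ) (MvPolynomial (Fin 2) ℝ) :=
  pderiv 1 + ν • pderiv 0

theorem ev_advection (ν : ℝ) (q : MvPolynomial (Fin 2) ℝ) (x t : ℝ) :
    ev (advection ν q) x t = ev (pderiv 1 q) x t + ν * ev (pderiv 0 q) x t := by
  simp [advection, ev]

theorem predictorEq_of_advection_eq_zero {p : ℕ} (ξ w : Fin (p + 1) → ℝ) {ν : ℝ}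
    {g : Polynomial ℝ} {q : MvPolynomial (Fin 2) ℝ} (hadv : advection ν q = 0)
    (hinit : ∀ x, ev q x (-1) = g.eval x) : PredictorEq ξ w ν g q := by
  have hflow (x t : ℝ) : ev (advection ν q) x t = 0 := by rw [hadv, ev, map_zero]
  intro φ _
  simp only [dVol, dT, ← ev_advection, hflow, hinit, sub_self, mul_zero, Finset.sum_const_zero,
    add_zero]

noncomputable def characteristic (ν : ℝ) : MvPolynomial (Fin 2) ℝ :=
  X 0 - C ν * (X 1 + 1)

theorem advection_characteristic (ν : ℝ) : advection ν (characteristic ν) = 0 := by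
  simp [advection, characteristic, pderiv_X, smul_eq_C_mul]

theorem advection_aeval_characteristic (ν : ℝ) (f : Polynomial ℝ) :
    advection ν (Polynomial.aeval (characteristic ν) f) = 0 := by
  rw [Derivation.map_aeval, advection_characteristic, smul_zero]

theorem ev_characteristic (ν x t : ℝ) : ev (characteristic ν) x t = x - ν * (t + 1) := by
  simp [characteristic, ev]

theorem totalDegree_characteristic_le (ν : ℝ) : (characteristic ν).totalDegree ≤ 1 := by
  unfold characteristic
  refine (totalDegree_sub _ _).trans (max_le ((totalDegree_X _).le) ?_)
  refine (totalDegree_mul _ _).trans ?_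
  rw [totalDegree_C, zero_add]
  exact (totalDegree_add _ _).trans (max_le ((totalDegree_X _).le) (by simp))

theorem predictor_recovers_initial_data_general
    (p : ℕ)
    (ξ w : Fin (p + 1) → ℝ)
    (hmono : StrictMono ξ)
    (g : Polynomial ℝ) (hg : g.natDegree ≤ p) (ν : ℝ)
    (l : Fin (p + 1) → Polynomial ℝ)
    (hl_deg : ∀ i, (l i).natDegree = p)
    (hl_eval : ∀ i j, (l i).eval (ξ j) = if i = j then 1 else 0)
    (qt : MvPolynomial (Fin 2) ℝ)
    (hqt : qt = ∑ i, MvPolynomial.C (g.eval (ξ i)) *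
      Polynomial.aeval (X 0 - MvPolynomial.C ν * (X 1 + 1) : MvPolynomial (Fin 2) ℝ) (l i)) :
    qt ∈ Vp p ∧ (∀ x : ℝ, ev qt x (-1) = g.eval x) ∧ PredictorEq ξ w ν g qt := by
  have hinterp : ∑ i, Polynomial.C (g.eval (ξ i)) * l i = g :=
    Polynomial.sum_C_eval_mul_eq_self hmono.injective
      (fun i => by simp [hl_deg]) hl_eval (by simpa [Nat.lt_succ_iff] using hg)
  have hq : qt = Polynomial.aeval (characteristic ν) g := by
    rw [hqt]
    conv_rhs => rw [← hinterp]
    simp only [map_sum, map_mul, Polynomial.aeval_C, algebraMap_eq]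
    rfl
  have hinit (x : ℝ) : ev qt x (-1) = g.eval x := by
    simp [hq, ev_aeval, ev_characteristic]
  refine ⟨hq ▸ aeval_mem_Vp (totalDegree_characteristic_le ν) hg, hinit, ?_⟩
  exact predictorEq_of_advection_eq_zero ξ w (hq ▸ advection_aeval_characteristic ν g) hinit

/-- the exact local predictor.
Let `g` be of degree `≤ p`, let `ν ∈ ℝ`, and let `l i` be the Lagrange basis polynomials
for the nodes `ξ 0, …, ξ p` (so `l i` has degree `p` and `l i (ξ j) = δ_{ij}`).  Define
`q̃(ξ, τ) := ∑ i, g(ξ i) · l i (ξ − ν(τ+1))`.  Then `q̃ ∈ V_p`, `q̃(ξ, −1) = g(ξ)` for all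
`ξ`, and `q̃` satisfies the predictor equation with data `g`: the predictor recovers the
previous solution at the beginning of the time step. -/
theorem predictor_recovers_initial_data
    (p : ℕ) (hp : 1 ≤ p)
    (ξ w : Fin (p + 1) → ℝ)
    (hmono : StrictMono ξ)
    (hξ0 : ξ 0 = -1) (hξlast : ξ (Fin.last p) = 1)
    (hw : ∀ i, 0 < w i)
    (hquad : ∀ f : Polynomial ℝ, f.natDegree ≤ 2 * p - 1 →
      ∑ i, w i * f.eval (ξ i) = ∫ x in (-1 : ℝ)..1, f.eval x)
    (g : Polynomial ℝ) (hg : g.natDegree ≤ p) (ν : ℝ)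
    (l : Fin (p + 1) → Polynomial ℝ)
    (hl_deg : ∀ i, (l i).natDegree = p)
    (hl_eval : ∀ i j, (l i).eval (ξ j) = if i = j then 1 else 0)
    (qt : MvPolynomial (Fin 2) ℝ)
    (hqt : qt = ∑ i, MvPolynomial.C (g.eval (ξ i)) *
      Polynomial.aeval (X 0 - MvPolynomial.C ν * (X 1 + 1) : MvPolynomial (Fin 2) ℝ) (l i)) :
    qt ∈ Vp p ∧ (∀ x : ℝ, ev qt x (-1) = g.eval x) ∧ PredictorEq ξ w ν g qt :=
  predictor_recovers_initial_data_general p ξ w hmono g hg ν l hl_deg hl_eval qt hqt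
end

section
/- Let ν ∈ ℝ, let ψ ∈ V_p, and let r be a univariate real polynomial of degree ≤ p such that for every φ ∈ V_p: ⟨φ·∂ψ/∂τ⟩ + ν ⟨φ·∂ψ/∂ξ⟩ + ⟨φ·ψ⟩_{τ=−1} − ν ⟨φ·ψ⟩_{ξ=1} = ν ⟨φ·r⟩_{ξ=−1}, where r is evaluated in the τ variable. Then the following identity between discrete boundary integrals of ψ² holds: ν ⟨½ψ²⟩_{ξ=1} − ⟨½ψ²⟩_{τ=−1} = ⟨½ψ²⟩_{τ=1} − ν ⟨ψ·r⟩_{ξ=−1} − ν ⟨½ψ²⟩_{ξ=−1}. -/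
/-!
Take `φ = ψ` in the hypothesis. On every grid line of the tensor grid, `ψ` restricts to a
polynomial `P` of degree `≤ p`, so `P P'` has degree `≤ 2p - 1` and the quadrature integrates it
exactly: `∑ wᵢ P(ξᵢ) P'(ξᵢ) = ∫₋₁¹ P P' = ½P(1)² - ½P(-1)²`. Summed over the lines, this turns
`⟨ψ ∂ψ/∂τ⟩` and `⟨ψ ∂ψ/∂ξ⟩` into differences of boundary integrals of `½ψ²` (summation by parts),
and the identity is then linear arithmetic.
-/

open BigOperators MvPolynomial

open scoped Polynomial

namespace MvPolynomial

variable {R σ : Type*} [CommSemiring R] [DecidableEq σ]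

/-- The restriction of `ψ` to the line through `c` parallel to the `k`-th axis, as a polynomial
in the `k`-th coordinate; the entry `c k` is irrelevant. -/
noncomputable def restrictLine (ψ : MvPolynomial σ R) (c : σ → R) (k : σ) : R[X] :=
  aeval (Function.update (fun i => Polynomial.C (c i)) k Polynomial.X) ψ

theorem eval_restrictLine (ψ : MvPolynomial σ R) (c : σ → R) (k : σ) (t : R) :
    (ψ.restrictLine c k).eval t = eval (Function.update c k t) ψ := by
  rw [restrictLine, ← Polynomial.coe_aeval_eq_eval, comp_aeval_apply, ← coe_aeval_eq_eval]
  refine congrArg (eval · ψ) ?_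
  funext i
  rw [Function.apply_update (fun _ => Polynomial.aeval t)]
  simp

theorem derivative_restrictLine (ψ : MvPolynomial σ R) (c : σ → R) (k : σ) :
    Polynomial.derivative (ψ.restrictLine c k) = (pderiv k ψ).restrictLine c k := by
  induction ψ using MvPolynomial.induction_on with
  | C a => simp [restrictLine]
  | add f g hf hg => simp only [restrictLine, map_add] at *; rw [hf, hg]
  | mul_X f i hf =>
    simp only [restrictLine, map_mul, aeval_X, Polynomial.derivative_mul, pderiv_mul, pderiv_X,
      map_add] at *
    rw [hf]
    by_cases hik : i = k
    · subst hik; simp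
    · simp [hik]

theorem natDegree_restrictLine_le (ψ : MvPolynomial σ R) (c : σ → R) (k : σ) :
    (ψ.restrictLine c k).natDegree ≤ ψ.degreeOf k := by
  rw [restrictLine, aeval_def, eval₂_eq]
  refine Polynomial.natDegree_sum_le_of_forall_le _ _ fun d hd => ?_
  have hline : ∀ i, (Function.update (fun i => Polynomial.C (c i)) k Polynomial.X i ^ d i).natDegree
      ≤ if i = k then d k else 0 := by
    intro i
    by_cases hik : i = k
    · subst hik; simp [Polynomial.natDegree_X_pow_le]
    · rw [Function.update_of_ne hik, ← Polynomial.C_pow, Polynomial.natDegree_C]; simp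
  calc _ ≤ ∑ i ∈ d.support,
        (Function.update (fun i => Polynomial.C (c i)) k Polynomial.X i ^ d i).natDegree :=
        (Polynomial.natDegree_C_mul_le _ _).trans (Polynomial.natDegree_prod_le _ _)
    _ ≤ ∑ i ∈ d.support, if i = k then d k else 0 := Finset.sum_le_sum fun i _ => hline i
    _ ≤ d k := by rw [Finset.sum_ite_eq']; split_ifs <;> simp
    _ ≤ ψ.degreeOf k := monomial_le_degreeOf k hd

end MvPolynomial

theorem integral_eval_mul_eval_derivative (P : ℝ[X]) (a b : ℝ) :
    ∫ x in a..b, P.eval x * P.derivative.eval x = 1 / 2 * P.eval b ^ 2 - 1 / 2 * P.eval a ^ 2 := by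
  have hderiv : ∀ x, HasDerivAt (fun y => 1 / 2 * P.eval y ^ 2)
      (P.eval x * P.derivative.eval x) x := fun x => by
    refine (((P.hasDerivAt x).pow 2).const_mul (1 / 2 : ℝ)).congr_deriv ?_
    norm_num
    ring
  exact intervalIntegral.integral_eq_sub_of_hasDerivAt (fun x _ => hderiv x)
    ((P.continuous.mul P.derivative.continuous).intervalIntegrable a b)

theorem sum_mul_eval_mul_eval_derivative_of_exact {ι : Type*} [Fintype ι] {ξ w : ι → ℝ}
    {a b : ℝ} {p : ℕ} (hquad : ∀ f : ℝ[X], f.natDegree ≤ 2 * p - 1 →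
      ∑ i, w i * f.eval (ξ i) = ∫ x in a..b, f.eval x)
    {P : ℝ[X]} (hP : P.natDegree ≤ p) :
    ∑ i, w i * (P.eval (ξ i) * P.derivative.eval (ξ i))
      = 1 / 2 * P.eval b ^ 2 - 1 / 2 * P.eval a ^ 2 := by
  have hdeg : (P * P.derivative).natDegree ≤ 2 * p - 1 := by
    have := P.natDegree_derivative_le
    have := P.natDegree_mul_le (q := P.derivative)
    omega
  simpa only [Polynomial.eval_mul, integral_eval_mul_eval_derivative] using hquad _ hdeg

theorem ev_eq_eval_restrictLine_one (ψ : MvPolynomial (Fin 2) ℝ) (x t : ℝ) :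
    ev ψ x t = (ψ.restrictLine ![x, 0] 1).eval t := by
  rw [MvPolynomial.eval_restrictLine, ev]
  refine congrArg (eval · ψ) ?_
  funext i
  fin_cases i <;> rfl

theorem ev_eq_eval_restrictLine_zero (ψ : MvPolynomial (Fin 2) ℝ) (x t : ℝ) :
    ev ψ x t = (ψ.restrictLine ![0, t] 0).eval x := by
  rw [MvPolynomial.eval_restrictLine, ev]
  refine congrArg (eval · ψ) ?_
  funext i
  fin_cases i <;> rfl

theorem dVol_mul_pderiv_one {p q : ℕ} {ξ w : Fin (p + 1) → ℝ}
    (hquad : ∀ f : ℝ[X], f.natDegree ≤ 2 * q - 1 →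
      ∑ i, w i * f.eval (ξ i) = ∫ x in (-1 : ℝ)..1, f.eval x)
    {ψ : MvPolynomial (Fin 2) ℝ} (hψ : ψ.degreeOf 1 ≤ q) :
    dVol ξ w (fun x t => ev ψ x t * ev (pderiv 1 ψ) x t)
      = dT ξ w (fun x t => 1 / 2 * ev ψ x t ^ 2) 1
        - dT ξ w (fun x t => 1 / 2 * ev ψ x t ^ 2) (-1) := by
  rw [dVol, dT, dT, ← Finset.sum_sub_distrib]
  refine Finset.sum_congr rfl fun i _ => ?_
  have hline := sum_mul_eval_mul_eval_derivative_of_exact hquad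
    ((ψ.natDegree_restrictLine_le ![ξ i, 0] 1).trans hψ)
  simp only [ev_eq_eval_restrictLine_one, ← MvPolynomial.derivative_restrictLine, mul_assoc]
  rw [← Finset.mul_sum, hline]
  ring

theorem dVol_mul_pderiv_zero {p q : ℕ} {ξ w : Fin (p + 1) → ℝ}
    (hquad : ∀ f : ℝ[X], f.natDegree ≤ 2 * q - 1 →
      ∑ i, w i * f.eval (ξ i) = ∫ x in (-1 : ℝ)..1, f.eval x)
    {ψ : MvPolynomial (Fin 2) ℝ} (hψ : ψ.degreeOf 0 ≤ q) :
    dVol ξ w (fun x t => ev ψ x t * ev (pderiv 0 ψ) x t)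
      = dX ξ w (fun x t => 1 / 2 * ev ψ x t ^ 2) 1
        - dX ξ w (fun x t => 1 / 2 * ev ψ x t ^ 2) (-1) := by
  rw [dVol, dX, dX, Finset.sum_comm, ← Finset.sum_sub_distrib]
  refine Finset.sum_congr rfl fun j _ => ?_
  have hline := sum_mul_eval_mul_eval_derivative_of_exact hquad
    ((ψ.natDegree_restrictLine_le ![0, ξ j] 0).trans hψ)
  simp only [ev_eq_eval_restrictLine_zero, ← MvPolynomial.derivative_restrictLine,
    mul_comm (w _) (w j), mul_assoc]
  rw [← Finset.mul_sum, hline]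
  ring

theorem dT_const_mul {p : ℕ} (ξ w : Fin (p + 1) → ℝ) (c : ℝ) (f : ℝ → ℝ → ℝ) (s : ℝ) :
    dT ξ w (fun x t => c * f x t) s = c * dT ξ w f s := by
  simp only [dT, Finset.mul_sum, mul_left_comm]

theorem dX_const_mul {p : ℕ} (ξ w : Fin (p + 1) → ℝ) (c : ℝ) (f : ℝ → ℝ → ℝ) (s : ℝ) :
    dX ξ w (fun x t => c * f x t) s = c * dX ξ w f s := by
  simp only [dX, Finset.mul_sum, mul_left_comm]

theorem boundary_integral_identity_general
    (p : ℕ)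
    (ξ w : Fin (p + 1) → ℝ)
    (hquad : ∀ f : Polynomial ℝ, f.natDegree ≤ 2 * p - 1 →
      ∑ i, w i * f.eval (ξ i) = ∫ x in (-1 : ℝ)..1, f.eval x)
    (ν : ℝ)
    (ψ : MvPolynomial (Fin 2) ℝ) (hψV : ψ ∈ Vp p)
    (r : Polynomial ℝ)
    (hψ : ∀ φ ∈ Vp p,
      dVol ξ w (fun x t => ev φ x t * ev (pderiv 1 ψ) x t) +
        ν * dVol ξ w (fun x t => ev φ x t * ev (pderiv 0 ψ) x t) +
        dT ξ w (fun x t => ev φ x t * ev ψ x t) (-1) -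
        ν * dX ξ w (fun x t => ev φ x t * ev ψ x t) 1
      = ν * dX ξ w (fun x t => ev φ x t * r.eval t) (-1)) :
    ν * dX ξ w (fun x t => 1 / 2 * (ev ψ x t) ^ 2) 1 -
        dT ξ w (fun x t => 1 / 2 * (ev ψ x t) ^ 2) (-1)
      = dT ξ w (fun x t => 1 / 2 * (ev ψ x t) ^ 2) 1 -
          ν * dX ξ w (fun x t => ev ψ x t * r.eval t) (-1) -
          ν * dX ξ w (fun x t => 1 / 2 * (ev ψ x t) ^ 2) (-1) := by
  have hψψ := hψ ψ hψV
  have hsq : ∀ x t, ev ψ x t * ev ψ x t = 2 * (1 / 2 * ev ψ x t ^ 2) := fun _ _ => by ring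
  simp only [hsq, dT_const_mul ξ w 2, dX_const_mul ξ w 2] at hψψ
  rw [dVol_mul_pderiv_one hquad hψV.2, dVol_mul_pderiv_zero hquad hψV.1] at hψψ
  linarith

/-- Lemma 4.2: relation between boundary integrals of `ψ²`.
Let `ψ ∈ V_p` and let `r` be a univariate polynomial of degree `≤ p` such that for all
`φ ∈ V_p`:
`⟨φ·∂ψ/∂τ⟩ + ν ⟨φ·∂ψ/∂ξ⟩ + ⟨φ·ψ⟩_{τ=−1} − ν ⟨φ·ψ⟩_{ξ=1} = ν ⟨φ·r⟩_{ξ=−1}`.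
Then
`ν ⟨½ψ²⟩_{ξ=1} − ⟨½ψ²⟩_{τ=−1} = ⟨½ψ²⟩_{τ=1} − ν ⟨ψ·r⟩_{ξ=−1} − ν ⟨½ψ²⟩_{ξ=−1}`. -/
theorem boundary_integral_identity
    (p : ℕ) (hp : 1 ≤ p)
    (ξ w : Fin (p + 1) → ℝ)
    (hmono : StrictMono ξ)
    (hξ0 : ξ 0 = -1) (hξlast : ξ (Fin.last p) = 1)
    (hw : ∀ i, 0 < w i)
    (hquad : ∀ f : Polynomial ℝ, f.natDegree ≤ 2 * p - 1 →
      ∑ i, w i * f.eval (ξ i) = ∫ x in (-1 : ℝ)..1, f.eval x)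
    (ν : ℝ)
    (ψ : MvPolynomial (Fin 2) ℝ) (hψV : ψ ∈ Vp p)
    (r : Polynomial ℝ) (hr : r.natDegree ≤ p)
    (hψ : ∀ φ ∈ Vp p,
      dVol ξ w (fun x t => ev φ x t * ev (pderiv 1 ψ) x t) +
        ν * dVol ξ w (fun x t => ev φ x t * ev (pderiv 0 ψ) x t) +
        dT ξ w (fun x t => ev φ x t * ev ψ x t) (-1) -
        ν * dX ξ w (fun x t => ev φ x t * ev ψ x t) 1
      = ν * dX ξ w (fun x t => ev φ x t * r.eval t) (-1)) :
    ν * dX ξ w (fun x t => 1 / 2 * (ev ψ x t) ^ 2) 1 -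
        dT ξ w (fun x t => 1 / 2 * (ev ψ x t) ^ 2) (-1)
      = dT ξ w (fun x t => 1 / 2 * (ev ψ x t) ^ 2) 1 -
          ν * dX ξ w (fun x t => ev ψ x t * r.eval t) (-1) -
          ν * dX ξ w (fun x t => 1 / 2 * (ev ψ x t) ^ 2) (-1) :=
  boundary_integral_identity_general p ξ w hquad ν ψ hψV r hψ
end

section
/- Let ν ∈ ℝ, let g be a univariate real polynomial of degree ≤ p, let a, b be univariate real polynomials of degree ≤ p, and let q ∈ V_p satisfy the corrector equation with data g, left-flux trace a and right-flux trace b. Then the per-element energy identity holds: ∑_{i=0}^{p} w_i ½ q(ξ_i, 1)² − ∑_{i=0}^{p} w_i ½ g(ξ_i)² = ν ∑_{j=0}^{p} w_j [(½ q(1, ξ_j)² − q(1, ξ_j) b(ξ_j)) − (½ q(−1, ξ_j)² − q(−1, ξ_j) a(ξ_j))] − ∑_{i=0}^{p} w_i ½ (q(ξ_i, −1) − g(ξ_i))². -/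
open BigOperators MvPolynomial

/-! Testing the corrector equation with `φ = q` turns the volume term into discrete integrals
of `q ∂_τ q` along temporal lines and of `q ∂_ξ q` along spatial lines.  On each line `q`
restricts to a polynomial `P` of degree `≤ p`, so `P P'` has degree `≤ 2p - 1`, the quadrature
is exact for it, and the fundamental theorem of calculus gives `½ P(1)² - ½ P(-1)²`.  The
identity is then the tested equation rearranged. -/

section LineRestriction

variable {R σ : Type*} [CommRing R] [DecidableEq σ]

noncomputable def restrictToLine (k : σ) (v : σ → R) : MvPolynomial σ R →ₐ[R] Polynomial R :=
  aeval (Function.update (fun i => Polynomial.C (v i)) k Polynomial.X)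

theorem eval_restrictToLine (k : σ) (v : σ → R) (Q : MvPolynomial σ R) (t : R) :
    (restrictToLine k v Q).eval t = eval (Function.update v k t) Q := by
  rw [restrictToLine, ← Polynomial.coe_aeval_eq_eval, ← AlgHom.comp_apply, comp_aeval]
  change eval _ Q = eval _ Q
  congr 2
  funext i
  by_cases h : i = k
  · subst h; simp
  · simp [h]

theorem derivative_restrictToLine (k : σ) (v : σ → R) (Q : MvPolynomial σ R) :
    Polynomial.derivative (restrictToLine k v Q) = restrictToLine k v (pderiv k Q) := by
  induction Q using MvPolynomial.induction_on with
  | C c => simp [restrictToLine]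
  | add f g hf hg => simp only [map_add, hf, hg]
  | mul_X f i hf =>
    simp only [map_mul, map_add, Polynomial.derivative_mul, hf, Derivation.leibniz, pderiv_X,
      smul_eq_mul]
    by_cases h : i = k
    · subst h; simp [restrictToLine, add_comm, mul_comm]
    · simp [restrictToLine, h, mul_comm]

theorem restrictToLine_monomial [Fintype σ] (k : σ) (v : σ → R) (d : σ →₀ ℕ) (c : R) :
    restrictToLine k v (monomial d c)
      = Polynomial.C (c * ∏ i ∈ {k}ᶜ, v i ^ d i) * Polynomial.X ^ d k := by
  rw [restrictToLine, aeval_monomial, Finsupp.prod_fintype _ _ (fun _ => pow_zero _),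
    Fintype.prod_eq_mul_prod_compl k]
  have off_line : ∀ i ∈ ({k}ᶜ : Finset σ),
      Function.update (fun i => Polynomial.C (v i)) k Polynomial.X i ^ d i
        = Polynomial.C (v i ^ d i) := fun i hi => by
    have hik : i ≠ k := by simpa using hi
    simp [hik]
  rw [Finset.prod_congr rfl off_line, ← map_prod]
  simp only [Function.update_self, Polynomial.algebraMap_eq, map_mul]
  ring

theorem natDegree_restrictToLine_le [Fintype σ] (k : σ) (v : σ → R) (Q : MvPolynomial σ R) :
    (restrictToLine k v Q).natDegree ≤ Q.degreeOf k := by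
  conv_lhs => rw [Q.as_sum, map_sum]
  refine Polynomial.natDegree_sum_le_of_forall_le _ _ fun d hd => ?_
  rw [restrictToLine_monomial]
  exact (Polynomial.natDegree_C_mul_X_pow_le _ _).trans (monomial_le_degreeOf k hd)

end LineRestriction

section Quadrature

variable {ι : Type*} [Fintype ι]

def QuadratureExactUpTo (ξ w : ι → ℝ) (m : ℕ) : Prop :=
  ∀ f : Polynomial ℝ, f.natDegree ≤ m → ∑ i, w i * f.eval (ξ i) = ∫ x in (-1 : ℝ)..1, f.eval x

variable {ξ w : ι → ℝ} {n : ℕ}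

theorem intervalIntegral_eval_mul_derivative (P : Polynomial ℝ) (a b : ℝ) :
    ∫ x in a..b, P.eval x * P.derivative.eval x = 1 / 2 * P.eval b ^ 2 - 1 / 2 * P.eval a ^ 2 := by
  have hderiv : ∀ x ∈ Set.uIcc a b,
      HasDerivAt (fun y => 1 / 2 * P.eval y ^ 2) (P.eval x * P.derivative.eval x) x := by
    intro x _
    refine (((P.hasDerivAt x).fun_pow 2).const_mul (1 / 2 : ℝ)).congr_deriv ?_
    simp only [Nat.cast_ofNat, Nat.add_one_sub_one, pow_one]
    ring
  exact intervalIntegral.integral_eq_sub_of_hasDerivAt hderiv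
    ((P.continuous.mul P.derivative.continuous).intervalIntegrable _ _)

theorem sum_mul_eval_mul_derivative_of_exact
    (hquad : QuadratureExactUpTo ξ w (2 * n - 1))
    {P : Polynomial ℝ} (hP : P.natDegree ≤ n) :
    ∑ i, w i * (P.eval (ξ i) * P.derivative.eval (ξ i))
      = 1 / 2 * P.eval 1 ^ 2 - 1 / 2 * P.eval (-1) ^ 2 := by
  have hdeg : (P * P.derivative).natDegree ≤ 2 * n - 1 := by
    have := P.natDegree_derivative_le
    have := P.natDegree_mul_le (q := P.derivative)
    omega
  have hexact := hquad _ hdeg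
  simp only [Polynomial.eval_mul] at hexact
  rw [hexact, intervalIntegral_eval_mul_derivative]

theorem sum_mul_eval_mul_eval_pderiv_of_exact {σ : Type*} [Fintype σ] [DecidableEq σ]
    (hquad : QuadratureExactUpTo ξ w (2 * n - 1))
    {Q : MvPolynomial σ ℝ} {k : σ} (hQ : Q.degreeOf k ≤ n) (v : σ → ℝ) :
    ∑ i, w i * (eval (Function.update v k (ξ i)) Q *
        eval (Function.update v k (ξ i)) (pderiv k Q))
      = 1 / 2 * eval (Function.update v k 1) Q ^ 2
        - 1 / 2 * eval (Function.update v k (-1)) Q ^ 2 := by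
  simpa only [eval_restrictToLine, derivative_restrictToLine] using
    sum_mul_eval_mul_derivative_of_exact hquad
      ((natDegree_restrictToLine_le k v Q).trans hQ)

end Quadrature

section SpaceTime

variable {p : ℕ} {ξ w : Fin (p + 1) → ℝ} {q : MvPolynomial (Fin 2) ℝ}

theorem sum_mul_ev_mul_ev_pderiv_time
    (hquad : QuadratureExactUpTo ξ w (2 * p - 1)) (hq : q ∈ Vp p) (x : ℝ) :
    ∑ j, w j * (ev q x (ξ j) * ev (pderiv 1 q) x (ξ j))
      = 1 / 2 * ev q x 1 ^ 2 - 1 / 2 * ev q x (-1) ^ 2 := by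
  have hline : ∀ t, Function.update ![x, 0] 1 t = ![x, t] := fun t => by
    funext i; fin_cases i <;> rfl
  simpa only [hline, ev] using sum_mul_eval_mul_eval_pderiv_of_exact hquad hq.2 ![x, 0]

theorem sum_mul_ev_mul_ev_pderiv_space
    (hquad : QuadratureExactUpTo ξ w (2 * p - 1)) (hq : q ∈ Vp p) (t : ℝ) :
    ∑ i, w i * (ev q (ξ i) t * ev (pderiv 0 q) (ξ i) t)
      = 1 / 2 * ev q 1 t ^ 2 - 1 / 2 * ev q (-1) t ^ 2 := by
  have hline : ∀ x, Function.update ![0, t] 0 x = ![x, t] := fun x => by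
    funext i; fin_cases i <;> rfl
  simpa only [hline, ev] using sum_mul_eval_mul_eval_pderiv_of_exact hquad hq.1 ![0, t]

theorem dVol_mul_advection_self
    (hquad : QuadratureExactUpTo ξ w (2 * p - 1)) (hq : q ∈ Vp p) (ν : ℝ) :
    dVol ξ w (fun x t => ev q x t * (ev (pderiv 1 q) x t + ν * ev (pderiv 0 q) x t))
      = ∑ i, w i * (1 / 2 * ev q (ξ i) 1 ^ 2 - 1 / 2 * ev q (ξ i) (-1) ^ 2)
        + ν * ∑ j, w j * (1 / 2 * ev q 1 (ξ j) ^ 2 - 1 / 2 * ev q (-1) (ξ j) ^ 2) := by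
  have hsplit : ∀ i j, w i * w j *
      (ev q (ξ i) (ξ j) * (ev (pderiv 1 q) (ξ i) (ξ j) + ν * ev (pderiv 0 q) (ξ i) (ξ j)))
        = w i * (w j * (ev q (ξ i) (ξ j) * ev (pderiv 1 q) (ξ i) (ξ j)))
          + ν * (w j * (w i * (ev q (ξ i) (ξ j) * ev (pderiv 0 q) (ξ i) (ξ j)))) :=
    fun i j => by ring
  simp only [dVol, hsplit, Finset.sum_add_distrib, ← Finset.mul_sum,
    sum_mul_ev_mul_ev_pderiv_time hquad hq]
  rw [Finset.sum_comm]
  simp only [← Finset.mul_sum, sum_mul_ev_mul_ev_pderiv_space hquad hq]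

end SpaceTime

theorem per_element_energy_identity_general
    (p : ℕ)
    (ξ w : Fin (p + 1) → ℝ)
    (hquad : ∀ f : Polynomial ℝ, f.natDegree ≤ 2 * p - 1 →
      ∑ i, w i * f.eval (ξ i) = ∫ x in (-1 : ℝ)..1, f.eval x)
    (ν : ℝ) (g : Polynomial ℝ)
    (a b : Polynomial ℝ)
    (q : MvPolynomial (Fin 2) ℝ) (hqV : q ∈ Vp p)
    (hcor : CorrectorEq ξ w ν g a b q) :
    ∑ i, w i * (1 / 2 * (ev q (ξ i) 1) ^ 2) - ∑ i, w i * (1 / 2 * (g.eval (ξ i)) ^ 2)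
      = ν * ∑ j, w j *
          ((1 / 2 * (ev q 1 (ξ j)) ^ 2 - ev q 1 (ξ j) * b.eval (ξ j)) -
            (1 / 2 * (ev q (-1) (ξ j)) ^ 2 - ev q (-1) (ξ j) * a.eval (ξ j)))
        - ∑ i, w i * (1 / 2 * (ev q (ξ i) (-1) - g.eval (ξ i)) ^ 2) := by
  have htested := hcor q hqV
  rw [dVol_mul_advection_self hquad hqV, dT, dX, dX] at htested
  rw [← sub_eq_zero, ← htested]
  simp only [Finset.mul_sum, ← Finset.sum_add_distrib, ← Finset.sum_sub_distrib]
  exact Finset.sum_congr rfl fun i _ => by ring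

/-- per-element energy identity of the corrector step.
Let `q ∈ V_p` satisfy the corrector equation with data `g`, left-flux trace `a` and
right-flux trace `b` (all of degree `≤ p`).  Then
`∑ i, w i ½ q(ξ i, 1)² − ∑ i, w i ½ g(ξ i)²`
`= ν ∑ j, w j [(½ q(1, ξ j)² − q(1, ξ j) b(ξ j)) − (½ q(−1, ξ j)² − q(−1, ξ j) a(ξ j))]`
`− ∑ i, w i ½ (q(ξ i, −1) − g(ξ i))²`. -/
theorem per_element_energy_identity
    (p : ℕ) (hp : 1 ≤ p)
    (ξ w : Fin (p + 1) → ℝ)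
    (hmono : StrictMono ξ)
    (hξ0 : ξ 0 = -1) (hξlast : ξ (Fin.last p) = 1)
    (hw : ∀ i, 0 < w i)
    (hquad : ∀ f : Polynomial ℝ, f.natDegree ≤ 2 * p - 1 →
      ∑ i, w i * f.eval (ξ i) = ∫ x in (-1 : ℝ)..1, f.eval x)
    (ν : ℝ) (g : Polynomial ℝ) (hg : g.natDegree ≤ p)
    (a b : Polynomial ℝ) (ha : a.natDegree ≤ p) (hb : b.natDegree ≤ p)
    (q : MvPolynomial (Fin 2) ℝ) (hqV : q ∈ Vp p)
    (hcor : CorrectorEq ξ w ν g a b q) :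
    ∑ i, w i * (1 / 2 * (ev q (ξ i) 1) ^ 2) - ∑ i, w i * (1 / 2 * (g.eval (ξ i)) ^ 2)
      = ν * ∑ j, w j *
          ((1 / 2 * (ev q 1 (ξ j)) ^ 2 - ev q 1 (ξ j) * b.eval (ξ j)) -
            (1 / 2 * (ev q (-1) (ξ j)) ^ 2 - ev q (-1) (ξ j) * a.eval (ξ j)))
        - ∑ i, w i * (1 / 2 * (ev q (ξ i) (-1) - g.eval (ξ i)) ^ 2) :=
  per_element_energy_identity_general p ξ w hquad ν g a b q hqV hcor
end

section
/- Consider K ≥ 1 elements indexed by k ∈ ℤ/Kℤ (periodic), ν ∈ ℝ, univariate real polynomials g_k of degree ≤ p, arbitrary q̃_k ∈ V_p, and correctors q_k ∈ V_p each satisfying the corrector equation with data g_k, left-flux trace a_k(τ) = q̃_{k−1}(1, τ) and right-flux trace b_k(τ) = q̃_k(1, τ). Then ∑_{k} [∑_{i} w_i ½ q_k(ξ_i, 1)² − ∑_{i} w_i ½ g_k(ξ_i)²] = ∑_{k} [ν ∑_{j} w_j (½ (q_k(1, ξ_j) − q̃_k(1, ξ_j))² − ½ (q_k(−1, ξ_j)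 − q̃_{k−1}(1, ξ_j))²) − ∑_{i} w_i ½ (q_k(ξ_i, −1) − g_k(ξ_i))²]. -/
open BigOperators MvPolynomial

/-!
Testing the corrector equation with `φ = q_k` turns the volume term into boundary terms:
along each line of nodes `q ∂q` is a polynomial of degree `≤ 2p - 1`, which the quadrature
integrates exactly, giving `½ q²` at the two endpoints. Completing the square in the initial
and flux terms, `q (b - q) = ½ b² - ½ q² - ½ (q - b)²`, leaves per element the stated
dissipation plus `ν (½ ⟨q̃_{k-1}(1, ·)²⟩ - ½ ⟨q̃_k(1, ·)²⟩)`, which telescopes in the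
periodic sum over `k`.
-/

noncomputable def sliceAlong {σ R : Type*} [CommSemiring R] [DecidableEq σ] (i : σ) (v : σ → R)
    (Q : MvPolynomial σ R) : Polynomial R :=
  eval₂ Polynomial.C (Function.update (fun j => Polynomial.C (v j)) i Polynomial.X) Q

namespace sliceAlong

variable {σ R : Type*} [CommSemiring R] [DecidableEq σ] (i : σ) (v : σ → R)
  (Q : MvPolynomial σ R)

theorem eval_eq (t : R) : (sliceAlong i v Q).eval t = eval (Function.update v i t) Q := by
  rw [sliceAlong, ← Polynomial.coe_evalRingHom, eval₂_comp_left, Function.comp_update]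
  congr
  · ext; simp
  · funext j; simp
  · simp

theorem natDegree_le : (sliceAlong i v Q).natDegree ≤ Q.degreeOf i := by
  rw [sliceAlong, eval₂_eq]
  refine Polynomial.natDegree_sum_le_of_forall_le _ _ fun d hd => ?_
  refine (Polynomial.natDegree_C_mul_le _ _).trans <| (Polynomial.natDegree_prod_le _ _).trans ?_
  refine le_trans ?_ (monomial_le_degreeOf i hd)
  calc ∑ j ∈ d.support,
        (Function.update (fun j => Polynomial.C (v j)) i Polynomial.X j ^ d j).natDegree
      ≤ ∑ j ∈ d.support, if j = i then d j else 0 := by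
        refine Finset.sum_le_sum fun j _ => ?_
        by_cases h : j = i
        · subst h; simpa using Polynomial.natDegree_X_pow_le _
        · simp only [Function.update_of_ne h, h, if_false, ← Polynomial.C_pow,
            Polynomial.natDegree_C, le_refl]
    _ ≤ d i := by
        rw [Finset.sum_ite_eq']; split_ifs <;> simp

theorem derivative_eq :
    Polynomial.derivative (sliceAlong i v Q) = sliceAlong i v (pderiv i Q) := by
  induction Q using MvPolynomial.induction_on with
  | C a => simp [sliceAlong]
  | add P R hP hR => simp only [sliceAlong, eval₂_add, map_add] at *; rw [hP, hR]
  | mul_X P n hP =>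
    simp only [sliceAlong] at *
    by_cases h : n = i
    · subst h
      simp only [eval₂_mul, eval₂_X, Function.update_self, Polynomial.derivative_mul, hP,
        Polynomial.derivative_X, mul_one, Derivation.leibniz, pderiv_X, Pi.single_eq_same,
        smul_eq_mul, eval₂_add]
      ring
    · simp [hP, pderiv_X, h, mul_comm]

end sliceAlong

def QuadratureExact {ι : Type*} [Fintype ι] (ξ w : ι → ℝ) (a b : ℝ) (d : ℕ) : Prop :=
  ∀ f : Polynomial ℝ, f.natDegree ≤ d → ∑ i, w i * f.eval (ξ i) = ∫ x in a..b, f.eval x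

namespace QuadratureExact
open Polynomial (derivative)
variable {ι : Type*} [Fintype ι] {ξ w : ι → ℝ} {a b : ℝ} {n : ℕ}

theorem sum_mul_derivative (hquad : QuadratureExact ξ w a b (2 * n - 1)) {P : Polynomial ℝ}
    (hP : P.natDegree ≤ n) :
    ∑ i, w i * (P.eval (ξ i) * (derivative P).eval (ξ i)) =
      1 / 2 * P.eval b ^ 2 - 1 / 2 * P.eval a ^ 2 := by
  have hdeg : (P * derivative P).natDegree ≤ 2 * n - 1 := by
    have := Polynomial.natDegree_derivative_le P
    have := Polynomial.natDegree_mul_le (p := P) (q := derivative P)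
    omega
  have hderiv (x : ℝ) :
      HasDerivAt (fun y => 1 / 2 * P.eval y ^ 2) ((P * derivative P).eval x) x :=
    (((P.hasDerivAt x).fun_pow 2).const_mul (1 / 2 : ℝ)).congr_deriv (by simp; ring)
  calc ∑ i, w i * (P.eval (ξ i) * (derivative P).eval (ξ i))
      = ∑ i, w i * (P * derivative P).eval (ξ i) := by simp only [Polynomial.eval_mul]
    _ = ∫ x in a..b, (P * derivative P).eval x := hquad _ hdeg
    _ = 1 / 2 * P.eval b ^ 2 - 1 / 2 * P.eval a ^ 2 :=
      intervalIntegral.integral_eq_sub_of_hasDerivAt (fun x _ => hderiv x)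
        ((P * derivative P).continuous.intervalIntegrable a b)

theorem sum_mul_pderiv {σ : Type*} [DecidableEq σ]
    (hquad : QuadratureExact ξ w a b (2 * n - 1))
    {Q : MvPolynomial σ ℝ} {k : σ} (hQ : Q.degreeOf k ≤ n) (v : σ → ℝ) :
    ∑ j, w j * (eval (Function.update v k (ξ j)) Q *
        eval (Function.update v k (ξ j)) (pderiv k Q)) =
      1 / 2 * eval (Function.update v k b) Q ^ 2 - 1 / 2 * eval (Function.update v k a) Q ^ 2 := by
  simpa only [sliceAlong.derivative_eq, sliceAlong.eval_eq] using
    hquad.sum_mul_derivative ((sliceAlong.natDegree_le k v Q).trans hQ)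

end QuadratureExact

theorem ev_eq_eval_update_one (Q : MvPolynomial (Fin 2) ℝ) (x s t : ℝ) :
    ev Q x t = eval (Function.update ![x, s] 1 t) Q := by
  rw [ev]; congr; ext j; fin_cases j <;> rfl

theorem ev_eq_eval_update_zero (Q : MvPolynomial (Fin 2) ℝ) (x s t : ℝ) :
    ev Q x t = eval (Function.update ![s, t] 0 x) Q := by
  rw [ev]; congr; ext j; fin_cases j <;> rfl

section Energy

variable {p : ℕ} {ξ w : Fin (p + 1) → ℝ} (hquad : QuadratureExact ξ w (-1) 1 (2 * p - 1))
  {Q : MvPolynomial (Fin 2) ℝ}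
include hquad

theorem dVol_mul_pderiv_time (hQ : Q.degreeOf 1 ≤ p) :
    dVol ξ w (fun x t => ev Q x t * ev (pderiv 1 Q) x t) =
      dT ξ w (fun x t => 1 / 2 * ev Q x t ^ 2) 1 -
        dT ξ w (fun x t => 1 / 2 * ev Q x t ^ 2) (-1) := by
  simp only [dVol, dT, ← Finset.sum_sub_distrib]
  refine Finset.sum_congr rfl fun i _ => ?_
  have h := hquad.sum_mul_pderiv hQ ![ξ i, 0]
  simp only [← ev_eq_eval_update_one] at h
  rw [← mul_sub, ← h, Finset.mul_sum]
  exact Finset.sum_congr rfl fun j _ => by ring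

theorem dVol_mul_pderiv_space (hQ : Q.degreeOf 0 ≤ p) :
    dVol ξ w (fun x t => ev Q x t * ev (pderiv 0 Q) x t) =
      dX ξ w (fun x t => 1 / 2 * ev Q x t ^ 2) 1 -
        dX ξ w (fun x t => 1 / 2 * ev Q x t ^ 2) (-1) := by
  rw [dVol, Finset.sum_comm]
  simp only [dX, ← Finset.sum_sub_distrib]
  refine Finset.sum_congr rfl fun j _ => ?_
  have h := hquad.sum_mul_pderiv hQ ![0, ξ j]
  simp only [← ev_eq_eval_update_zero] at h
  rw [← mul_sub, ← h, Finset.mul_sum]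
  exact Finset.sum_congr rfl fun i _ => by ring

end Energy

theorem traceRight_eval (Q : MvPolynomial (Fin 2) ℝ) (t : ℝ) :
    (traceRight Q).eval t = ev Q 1 t := by
  have h : traceRight Q = sliceAlong 1 ![1, 0] Q := by
    rw [traceRight, sliceAlong]; congr; funext j; fin_cases j <;> simp
  rw [h, sliceAlong.eval_eq, ← ev_eq_eval_update_one]

theorem CorrectorEq.energy_balance {p : ℕ} {ξ w : Fin (p + 1) → ℝ}
    (hquad : QuadratureExact ξ w (-1) 1 (2 * p - 1)) {ν : ℝ} {g a b : Polynomial ℝ}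
    {q : MvPolynomial (Fin 2) ℝ} (hcor : CorrectorEq ξ w ν g a b q) (hq : q ∈ Vp p) :
    ∑ i, w i * (1 / 2 * ev q (ξ i) 1 ^ 2) - ∑ i, w i * (1 / 2 * g.eval (ξ i) ^ 2) =
      ν * ∑ j, w j * (1 / 2 * (ev q 1 (ξ j) - b.eval (ξ j)) ^ 2 -
          1 / 2 * (ev q (-1) (ξ j) - a.eval (ξ j)) ^ 2)
        - ∑ i, w i * (1 / 2 * (ev q (ξ i) (-1) - g.eval (ξ i)) ^ 2)
        + ν * (∑ j, w j * (1 / 2 * a.eval (ξ j) ^ 2) -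
          ∑ j, w j * (1 / 2 * b.eval (ξ j) ^ 2)) := by
  have h := hcor q hq
  have hsplit :
      dVol ξ w (fun x t => ev q x t * (ev (pderiv 1 q) x t + ν * ev (pderiv 0 q) x t)) =
      dVol ξ w (fun x t => ev q x t * ev (pderiv 1 q) x t) +
        ν * dVol ξ w (fun x t => ev q x t * ev (pderiv 0 q) x t) := by
    simp only [dVol, Finset.mul_sum, ← Finset.sum_add_distrib]
    exact Finset.sum_congr rfl fun i _ => Finset.sum_congr rfl fun j _ => by ring
  rw [hsplit, dVol_mul_pderiv_time hquad hq.2, dVol_mul_pderiv_space hquad hq.1] at h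
  -- all quadratures share the nodes, so the balance holds node by node
  rw [← sub_eq_zero, ← h]
  simp only [dT, dX, Finset.mul_sum, ← Finset.sum_sub_distrib, ← Finset.sum_add_distrib]
  exact Finset.sum_congr rfl fun i _ => by ring

theorem Fintype.sum_sub_comp_sub_eq_zero {G M : Type*} [AddGroup G] [Fintype G] [AddCommGroup M]
    (f : G → M) (c : G) : ∑ k, (f (k - c) - f k) = 0 := by
  rw [Finset.sum_sub_distrib, sub_eq_zero]
  exact (Equiv.subRight c).sum_comp f

theorem global_energy_identity_general
    (p : ℕ)
    (ξ w : Fin (p + 1) → ℝ)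
    (hquad : ∀ f : Polynomial ℝ, f.natDegree ≤ 2 * p - 1 →
      ∑ i, w i * f.eval (ξ i) = ∫ x in (-1 : ℝ)..1, f.eval x)
    (K : ℕ) [NeZero K]
    (ν : ℝ)
    (g : ZMod K → Polynomial ℝ)
    (qt : ZMod K → MvPolynomial (Fin 2) ℝ)
    (q : ZMod K → MvPolynomial (Fin 2) ℝ) (hqV : ∀ k, q k ∈ Vp p)
    (hcor : ∀ k, CorrectorEq ξ w ν (g k) (traceRight (qt (k - 1))) (traceRight (qt k)) (q k)) :
    ∑ k : ZMod K,
        (∑ i, w i * (1 / 2 * (ev (q k) (ξ i) 1) ^ 2) -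
          ∑ i, w i * (1 / 2 * ((g k).eval (ξ i)) ^ 2))
      = ∑ k : ZMod K,
          (ν * ∑ j, w j *
              (1 / 2 * (ev (q k) 1 (ξ j) - ev (qt k) 1 (ξ j)) ^ 2 -
                1 / 2 * (ev (q k) (-1) (ξ j) - ev (qt (k - 1)) 1 (ξ j)) ^ 2)
            - ∑ i, w i * (1 / 2 * (ev (q k) (ξ i) (-1) - (g k).eval (ξ i)) ^ 2)) := by
  have hbal := fun k => (hcor k).energy_balance hquad (hqV k)
  simp only [traceRight_eval] at hbal
  rw [Finset.sum_congr rfl fun k _ => hbal k, Finset.sum_add_distrib, ← Finset.mul_sum,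
    Fintype.sum_sub_comp_sub_eq_zero (fun k => ∑ j, w j * (1 / 2 * ev (qt k) 1 (ξ j) ^ 2)),
    mul_zero, add_zero]

/-- global energy identity for arbitrary predictors.
Consider `K ≥ 1` elements indexed by `k ∈ ℤ/Kℤ`, data `g k` of degree `≤ p`, arbitrary
`q̃ k ∈ V_p` and correctors `q k ∈ V_p`, each satisfying the corrector equation with data
`g k`, left-flux trace `a k (τ) = q̃ (k−1) (1, τ)` and right-flux trace
`b k (τ) = q̃ k (1, τ)`.  Then
`∑ k [∑ i w i ½ (q k)(ξ i, 1)² − ∑ i w i ½ (g k)(ξ i)²]`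
`= ∑ k [ν ∑ j w j (½ ((q k)(1, ξ j) − (q̃ k)(1, ξ j))² − ½ ((q k)(−1, ξ j) − (q̃ (k−1))(1, ξ j))²)`
`− ∑ i w i ½ ((q k)(ξ i, −1) − (g k)(ξ i))²]`. -/
theorem global_energy_identity
    (p : ℕ) (hp : 1 ≤ p)
    (ξ w : Fin (p + 1) → ℝ)
    (hmono : StrictMono ξ)
    (hξ0 : ξ 0 = -1) (hξlast : ξ (Fin.last p) = 1)
    (hw : ∀ i, 0 < w i)
    (hquad : ∀ f : Polynomial ℝ, f.natDegree ≤ 2 * p - 1 →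
      ∑ i, w i * f.eval (ξ i) = ∫ x in (-1 : ℝ)..1, f.eval x)
    (K : ℕ) (hK : 1 ≤ K) [NeZero K]
    (ν : ℝ)
    (g : ZMod K → Polynomial ℝ) (hg : ∀ k, (g k).natDegree ≤ p)
    (qt : ZMod K → MvPolynomial (Fin 2) ℝ) (hqtV : ∀ k, qt k ∈ Vp p)
    (q : ZMod K → MvPolynomial (Fin 2) ℝ) (hqV : ∀ k, q k ∈ Vp p)
    (hcor : ∀ k, CorrectorEq ξ w ν (g k) (traceRight (qt (k - 1))) (traceRight (qt k)) (q k)) :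
    ∑ k : ZMod K,
        (∑ i, w i * (1 / 2 * (ev (q k) (ξ i) 1) ^ 2) -
          ∑ i, w i * (1 / 2 * ((g k).eval (ξ i)) ^ 2))
      = ∑ k : ZMod K,
          (ν * ∑ j, w j *
              (1 / 2 * (ev (q k) 1 (ξ j) - ev (qt k) 1 (ξ j)) ^ 2 -
                1 / 2 * (ev (q k) (-1) (ξ j) - ev (qt (k - 1)) 1 (ξ j)) ^ 2)
            - ∑ i, w i * (1 / 2 * (ev (q k) (ξ i) (-1) - (g k).eval (ξ i)) ^ 2)) :=
  global_energy_identity_general p ξ w hquad K ν g qt q hqV hcor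
end
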